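/- Let 0 < k₁ < 3/2, n₁ = k₁ + 3/2, and let f : ℝ⁶ → [0,∞) be measurable with f ∈ L¹ ∩ L^{1+1/k₁}(ℝ⁶) and finite kinetic energy E_kin(f) = ½∬|v|²f dv dx < ∞. Then ρ_f(x) = ∫f(x,v) dv belongs to L^{1+1/n₁}(ℝ³), with ∫ρ_f^{1+1/n₁} dx ≤ C(‖f‖_{1+1/k₁}, E_kin(f)) for a constant depending only on the indicated quantities (and k₁). -/

import Mathlib

open MeasureTheory Metric
open scoped ENNReal

section aux

variable {k₁ : ℝ}

lemma conj_p (hk₁ : 0 < k₁) : Real.HolderConjugate (1 + 1/k₁) (k₁ + 1) := by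
  refine Real.holderConjugate_iff.mpr ⟨?_, ?_⟩
  · have := one_div_pos.mpr hk₁; linarith
  · rw [inv_eq_one_div, inv_eq_one_div]
    field_simp

lemma conj_r (hk₁ : 0 < k₁) :
    Real.HolderConjugate ((2*k₁+3)/(2*k₁)) ((2*k₁+3)/3) := by
  refine Real.holderConjugate_iff.mpr ⟨?_, ?_⟩
  · rw [lt_div_iff₀ (by linarith)]; linarith
  · rw [inv_div, inv_div, div_add_div _ _ (by positivity) (by positivity),
      div_eq_one_iff_eq (by positivity)]
    ring

/-- The optimization of the radius `R`. -/
lemma opt (hk₁ : 0 < k₁) {G H : ℝ} (hG : 0 < G) (hH : 0 < H) :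
    ∃ R : ℝ, 0 < R ∧
      R ^ (3/(k₁+1)) * G ^ (1/(1+1/k₁)) =
        G ^ (2*k₁/(2*k₁+5)) * H ^ (3/(2*k₁+5)) ∧
      R ^ (-2 : ℝ) * H = G ^ (2*k₁/(2*k₁+5)) * H ^ (3/(2*k₁+5)) := by
  have h1 : (0:ℝ) < k₁ + 1 := by linarith
  have h2 : (0:ℝ) < 2*k₁+5 := by linarith
  have hp : (0:ℝ) < 1 + 1/k₁ := by positivity
  refine ⟨Real.exp (((k₁+1)/(2*k₁+5)) * (Real.log H - (1/(1+1/k₁)) * Real.log G)),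
    Real.exp_pos _, ?_, ?_⟩
  · rw [Real.rpow_def_of_pos (Real.exp_pos _), Real.rpow_def_of_pos hG,
      Real.rpow_def_of_pos hG, Real.rpow_def_of_pos hH, Real.log_exp,
      ← Real.exp_add, ← Real.exp_add]
    congr 1
    field_simp
    ring
  · rw [Real.rpow_def_of_pos (Real.exp_pos _), Real.rpow_def_of_pos hG,
      Real.rpow_def_of_pos hH, Real.log_exp, ← Real.exp_add]
    nth_rewrite 2 [← Real.exp_log hH]
    rw [← Real.exp_add]
    congr 1
    field_simp
    ring

end aux

noncomputable section main

open ENNReal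

abbrev E3 := EuclideanSpace ℝ (Fin 3)

variable {k₁ : ℝ}

lemma pointwise (hk₁ : 0 < k₁) (φ : E3 → ℝ≥0∞) (hφ : Measurable φ) :
    ∫⁻ v, φ v ≤
      ((volume (ball (0 : E3) 1)) ^ (1/(k₁+1)) + 1) *
        ((∫⁻ v, φ v ^ (1 + 1/k₁)) ^ (2*k₁/(2*k₁+5)) *
         (∫⁻ v, (‖v‖₊ : ℝ≥0∞) ^ (2:ℝ) * φ v) ^ (3/(2*k₁+5))) := by
  have hp1 : 1 < 1 + 1/k₁ := (Real.holderConjugate_iff.mp (conj_p hk₁)).1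
  have hp0 : (0:ℝ) < 1 + 1/k₁ := by linarith
  have ha0 : (0:ℝ) < 2*k₁/(2*k₁+5) := by positivity
  have hb0 : (0:ℝ) < 3/(2*k₁+5) := by positivity
  have hpc0 : (0:ℝ) < k₁ + 1 := by linarith
  set G := ∫⁻ v, φ v ^ (1 + 1/k₁) with hGdef
  set H := ∫⁻ v, (‖v‖₊ : ℝ≥0∞) ^ (2:ℝ) * φ v with hHdef
  set V := volume (ball (0 : E3) 1) with hVdef
  have hHm : Measurable fun v : E3 => (‖v‖₊ : ℝ≥0∞) ^ (2:ℝ) * φ v :=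
    (measurable_nnnorm.coe_nnreal_ennreal.pow_const _).mul hφ
  -- trivial case G = 0
  by_cases hG0 : G = 0
  · have hzero : φ =ᵐ[volume] 0 := by
      have h := (lintegral_eq_zero_iff (hφ.pow_const _)).1 hG0
      filter_upwards [h] with v hv
      rcases ENNReal.rpow_eq_zero_iff.1 hv with ⟨h1, _⟩ | ⟨_, h2⟩
      · exact h1
      · linarith
    rw [lintegral_congr_ae hzero]
    simp
  -- trivial case H = 0
  by_cases hH0 : H = 0
  · have h := (lintegral_eq_zero_iff hHm).1 hH0
    have h0 : ∀ᵐ (v : E3) ∂volume, v ≠ (0:E3) := by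
      rw [ae_iff]
      simpa using measure_singleton (0:E3)
    have hzero : φ =ᵐ[volume] 0 := by
      filter_upwards [h, h0] with v h1 h2
      rcases mul_eq_zero.1 h1 with h3 | h3
      · exact absurd h3 (by
          simp only [ENNReal.rpow_eq_zero_iff, ENNReal.coe_eq_zero, nnnorm_eq_zero]
          push_neg
          exact ⟨fun hv => absurd hv h2, fun _ => by norm_num⟩)
      · exact h3
    rw [lintegral_congr_ae hzero]
    simp
  have hK0 : V ^ (1/(k₁+1)) + 1 ≠ 0 := by simp
  -- case G = ⊤
  by_cases hGtop : G = ⊤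
  · have : G ^ (2*k₁/(2*k₁+5)) * H ^ (3/(2*k₁+5)) = ⊤ := by
      rw [hGtop, ENNReal.top_rpow_of_pos ha0, ENNReal.top_mul]
      simp only [ne_eq, ENNReal.rpow_eq_zero_iff, not_or, not_and]
      exact ⟨fun h => absurd h hH0, fun _ => by linarith⟩
    rw [this, ENNReal.mul_top hK0]
    exact le_top
  -- case H = ⊤
  by_cases hHtop : H = ⊤
  · have : G ^ (2*k₁/(2*k₁+5)) * H ^ (3/(2*k₁+5)) = ⊤ := by
      rw [hHtop, ENNReal.top_rpow_of_pos hb0, ENNReal.mul_top]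
      simp only [ne_eq, ENNReal.rpow_eq_zero_iff, not_or, not_and]
      exact ⟨fun h => absurd h hG0, fun _ => by linarith⟩
    rw [this, ENNReal.mul_top hK0]
    exact le_top
  -- main case
  have hGt : 0 < G.toReal := ENNReal.toReal_pos hG0 hGtop
  have hHt : 0 < H.toReal := ENNReal.toReal_pos hH0 hHtop
  obtain ⟨R, hR, e1, e2⟩ := opt hk₁ hGt hHt
  have hsplit := (lintegral_add_compl (μ := volume) φ (measurableSet_ball (x := (0:E3)) (ε := R))).symm
  -- first term : Hölder
  have ht1 : ∫⁻ v in ball (0:E3) R, φ v ≤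
      G ^ (1/(1 + 1/k₁)) * (volume (ball (0:E3) R)) ^ (1/(k₁+1)) := by
    have hindm : Measurable ((ball (0:E3) R).indicator (1 : E3 → ℝ≥0∞)) :=
      measurable_one.indicator measurableSet_ball
    have hHol := ENNReal.lintegral_mul_le_Lp_mul_Lq volume (conj_p hk₁)
      hφ.aemeasurable hindm.aemeasurable
    simp only [Pi.mul_apply] at hHol
    have heq : ∫⁻ v in ball (0:E3) R, φ v
        = ∫⁻ v, φ v * (ball (0:E3) R).indicator (1 : E3 → ℝ≥0∞) v := by
      rw [← lintegral_indicator measurableSet_ball]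
      congr 1
      funext v
      by_cases h : v ∈ ball (0:E3) R <;> simp [Set.indicator, h]
    rw [heq]
    refine hHol.trans_eq ?_
    congr 1
    have hind : ∀ v : E3, ((ball (0:E3) R).indicator (1 : E3 → ℝ≥0∞) v) ^ (k₁+1)
        = (ball (0:E3) R).indicator (1 : E3 → ℝ≥0∞) v := by
      intro v
      by_cases h : v ∈ ball (0:E3) R <;>
        simp [Set.indicator, h, ENNReal.zero_rpow_of_pos hpc0]
    simp only [hind]
    rw [lintegral_indicator measurableSet_ball]
    simp only [Pi.one_apply]
    rw [setLIntegral_one]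
  -- second term : tail estimate
  have ht2 : ∫⁻ v in (ball (0:E3) R)ᶜ, φ v ≤ (ENNReal.ofReal R) ^ (-2:ℝ) * H := by
    have hR0 : ENNReal.ofReal R ≠ 0 := by simp [hR]
    have hRtop : ENNReal.ofReal R ≠ ⊤ := ENNReal.ofReal_ne_top
    calc ∫⁻ v in (ball (0:E3) R)ᶜ, φ v
        ≤ ∫⁻ v in (ball (0:E3) R)ᶜ,
            (ENNReal.ofReal R) ^ (-2:ℝ) * ((‖v‖₊ : ℝ≥0∞) ^ (2:ℝ) * φ v) := by
          refine setLIntegral_mono (hHm.const_mul _) ?_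
          intro v hv
          have hvR : R ≤ ‖v‖ := by
            simp only [Set.mem_compl_iff, mem_ball, dist_zero_right, not_lt] at hv
            exact hv
          have h1 : (ENNReal.ofReal R) ^ (2:ℝ) ≤ (‖v‖₊ : ℝ≥0∞) ^ (2:ℝ) := by
            apply ENNReal.rpow_le_rpow _ (by norm_num)
            rw [← ENNReal.ofReal_coe_nnreal, coe_nnnorm]
            exact ENNReal.ofReal_le_ofReal hvR
          calc φ v = (ENNReal.ofReal R) ^ (-2:ℝ) * ((ENNReal.ofReal R) ^ (2:ℝ) * φ v) := by
                rw [← mul_assoc, ← ENNReal.rpow_add _ _ hR0 hRtop]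
                norm_num
            _ ≤ (ENNReal.ofReal R) ^ (-2:ℝ) * ((‖v‖₊ : ℝ≥0∞) ^ (2:ℝ) * φ v) := by
                gcongr
      _ ≤ ∫⁻ v, (ENNReal.ofReal R) ^ (-2:ℝ) * ((‖v‖₊ : ℝ≥0∞) ^ (2:ℝ) * φ v) :=
          setLIntegral_le_lintegral _ _
      _ = (ENNReal.ofReal R) ^ (-2:ℝ) * H := lintegral_const_mul _ hHm
  -- convert both bounds to the common form
  have hGeq : G = ENNReal.ofReal G.toReal := (ENNReal.ofReal_toReal hGtop).symm
  have hHeq : H = ENNReal.ofReal H.toReal := (ENNReal.ofReal_toReal hHtop).symm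
  have hX : ENNReal.ofReal (G.toReal ^ (2*k₁/(2*k₁+5)) * H.toReal ^ (3/(2*k₁+5)))
      = G ^ (2*k₁/(2*k₁+5)) * H ^ (3/(2*k₁+5)) := by
    rw [ENNReal.ofReal_mul (by positivity), ← ENNReal.ofReal_rpow_of_pos hGt,
      ← ENNReal.ofReal_rpow_of_pos hHt, ← hGeq, ← hHeq]
  have hball : (volume (ball (0:E3) R)) ^ (1/(k₁+1))
      = ENNReal.ofReal (R ^ (3/(k₁+1))) * V ^ (1/(k₁+1)) := by
    rw [Measure.addHaar_ball volume (0:E3) hR.le, finrank_euclideanSpace_fin,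
      ENNReal.mul_rpow_of_nonneg _ _ (by positivity), ← hVdef]
    congr 1
    rw [ENNReal.ofReal_rpow_of_pos (by positivity), ← Real.rpow_natCast R 3,
      ← Real.rpow_mul hR.le]
    norm_num [div_eq_mul_inv]
  have hGp : G ^ (1/(1 + 1/k₁)) = ENNReal.ofReal (G.toReal ^ (1/(1 + 1/k₁))) := by
    rw [← ENNReal.ofReal_rpow_of_pos hGt, ← hGeq]
  have hterm1 : G ^ (1/(1 + 1/k₁)) * (volume (ball (0:E3) R)) ^ (1/(k₁+1))
      ≤ V ^ (1/(k₁+1)) * (G ^ (2*k₁/(2*k₁+5)) * H ^ (3/(2*k₁+5))) := by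
    rw [hball, ← hX, ← e1, hGp]
    apply le_of_eq
    rw [ENNReal.ofReal_mul (by positivity)]
    ring
  have hterm2 : (ENNReal.ofReal R) ^ (-2:ℝ) * H
      ≤ G ^ (2*k₁/(2*k₁+5)) * H ^ (3/(2*k₁+5)) := by
    rw [← hX, ← e2, ENNReal.ofReal_mul (by positivity),
      ← ENNReal.ofReal_rpow_of_pos hR, ← hHeq]
  calc ∫⁻ v, φ v = (∫⁻ v in ball (0:E3) R, φ v) + ∫⁻ v in (ball (0:E3) R)ᶜ, φ v := hsplit
    _ ≤ V ^ (1/(k₁+1)) * (G ^ (2*k₁/(2*k₁+5)) * H ^ (3/(2*k₁+5)))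
        + G ^ (2*k₁/(2*k₁+5)) * H ^ (3/(2*k₁+5)) :=
        add_le_add (ht1.trans hterm1) (ht2.trans hterm2)
    _ = (V ^ (1/(k₁+1)) + 1) * (G ^ (2*k₁/(2*k₁+5)) * H ^ (3/(2*k₁+5))) := by
        rw [add_mul, one_mul]

end main

/-- If `f ∈ L¹ ∩ L^{1+1/k₁}(ℝ⁶)` is nonnegative with finite kinetic energy,
then `ρ_f(x) = ∫ f(x,v) dv ∈ L^{1+1/n₁}(ℝ³)` with `n₁ = k₁ + 3/2`, and
`∫ ρ_f^{1+1/n₁} ≤ C(‖f‖_{1+1/k₁}, E_kin(f))` for a constant depending only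
on these quantities and `k₁`. -/
theorem stmt_19 (k₁ : ℝ) (hk₁ : 0 < k₁) (hk₁' : k₁ < 3 / 2) :
    ∃ C : ℝ → ℝ → ℝ,
      ∀ f : EuclideanSpace ℝ (Fin 3) × EuclideanSpace ℝ (Fin 3) → ℝ,
        Measurable f → (∀ p, 0 ≤ f p) →
        Integrable f volume →
        MemLp f (ENNReal.ofReal (1 + 1 / k₁)) volume →
        Integrable (fun p => ‖p.2‖ ^ 2 * f p) volume →
        MemLp (fun x => ∫ v, f (x, v))
            (ENNReal.ofReal (1 + 1 / (k₁ + 3 / 2))) volume ∧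
        (∫ x : EuclideanSpace ℝ (Fin 3),
            (∫ v, f (x, v)) ^ (1 + 1 / (k₁ + 3 / 2))) ≤
          C (eLpNorm f (ENNReal.ofReal (1 + 1 / k₁)) volume).toReal
            ((1 / 2) * ∫ p, ‖p.2‖ ^ 2 * f p) := by
  have hp1 : 1 < 1 + 1/k₁ := (Real.holderConjugate_iff.mp (conj_p hk₁)).1
  have hp0 : (0:ℝ) < 1 + 1/k₁ := by linarith
  have hn : (0:ℝ) < k₁ + 3/2 := by linarith
  have hq0 : (0:ℝ) < 1 + 1/(k₁ + 3/2) := by positivity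
  have ha0 : (0:ℝ) < 2*k₁/(2*k₁+5) := by positivity
  have hb0 : (0:ℝ) < 3/(2*k₁+5) := by positivity
  set q : ℝ := 1 + 1/(k₁ + 3/2) with hqdef
  set a : ℝ := 2*k₁/(2*k₁+5) with hadef
  set b : ℝ := 3/(2*k₁+5) with hbdef
  set r : ℝ := (2*k₁+3)/(2*k₁) with hrdef
  set r' : ℝ := (2*k₁+3)/3 with hr'def
  have haqr : a * q * r = 1 := by
    rw [hadef, hqdef, hrdef]; field_simp; ring
  have hbqr : b * q * r' = 1 := by
    rw [hbdef, hqdef, hr'def]; field_simp; ring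
  set K : ℝ≥0∞ := (volume (Metric.ball (0:E3) 1)) ^ (1/(k₁+1)) + 1 with hKdef
  have hKtop : K ≠ ⊤ := by
    rw [hKdef]
    refine ENNReal.add_ne_top.2 ⟨?_, ENNReal.one_ne_top⟩
    exact (ENNReal.rpow_lt_top_of_nonneg (by positivity) measure_ball_lt_top.ne).ne
  refine ⟨fun A B => K.toReal ^ q * (A ^ (1 + 1/k₁)) ^ (1/r) * (2*B) ^ (1/r'), ?_⟩
  intro f hfm hfnn hfint hfLp hfE
  set F : E3 × E3 → ℝ≥0∞ := fun z => ENNReal.ofReal (f z) with hFdef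
  have hFm : Measurable F := hfm.ennreal_ofReal
  set g : E3 → ℝ≥0∞ := fun x => ∫⁻ v, F (x,v) ^ (1 + 1/k₁) with hgdef
  set h : E3 → ℝ≥0∞ := fun x => ∫⁻ v, (‖v‖₊ : ℝ≥0∞) ^ (2:ℝ) * F (x,v) with hhdef
  set ρ' : E3 → ℝ≥0∞ := fun x => ∫⁻ v, F (x,v) with hρdef
  have hgm : Measurable g :=
    Measurable.lintegral_prod_right (f := fun x v => F (x,v) ^ (1 + 1/k₁))
      (hFm.pow_const _)
  have hinner : Measurable (fun z : E3 × E3 => (‖z.2‖₊ : ℝ≥0∞) ^ (2:ℝ) * F z) :=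
    (measurable_snd.nnnorm.coe_nnreal_ennreal.pow_const _).mul hFm
  have hhm : Measurable h :=
    Measurable.lintegral_prod_right
      (f := fun x v => (‖v‖₊ : ℝ≥0∞) ^ (2:ℝ) * F (x,v)) hinner
  have hρ'm : Measurable ρ' :=
    Measurable.lintegral_prod_right (f := fun x v => F (x,v)) hFm
  -- pointwise bound
  have hpt : ∀ x, ρ' x ≤ K * (g x ^ a * h x ^ b) := fun x =>
    pointwise hk₁ (fun v => F (x,v)) (hFm.comp measurable_prodMk_left)
  -- step 2
  have h2 : ∫⁻ x, ρ' x ^ q ≤ K ^ q * ∫⁻ x, g x ^ (a*q) * h x ^ (b*q) := by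
    rw [← lintegral_const_mul _ (f := fun x => g x ^ (a*q) * h x ^ (b*q)) ((hgm.pow_const _).mul (hhm.pow_const _))]
    refine lintegral_mono fun x => ?_
    calc ρ' x ^ q ≤ (K * (g x ^ a * h x ^ b)) ^ q :=
          ENNReal.rpow_le_rpow (hpt x) hq0.le
      _ = K ^ q * (g x ^ (a*q) * h x ^ (b*q)) := by
          rw [ENNReal.mul_rpow_of_nonneg _ _ hq0.le,
            ENNReal.mul_rpow_of_nonneg _ _ hq0.le,
            ← ENNReal.rpow_mul, ← ENNReal.rpow_mul]
  -- Hölder in x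
  have h3 : ∫⁻ x, g x ^ (a*q) * h x ^ (b*q)
      ≤ (∫⁻ x, g x) ^ (1/r) * (∫⁻ x, h x) ^ (1/r') := by
    have hHol := ENNReal.lintegral_mul_le_Lp_mul_Lq volume (conj_r hk₁)
      ((hgm.pow_const (a*q)).aemeasurable) ((hhm.pow_const (b*q)).aemeasurable)
    simp only [Pi.mul_apply] at hHol
    refine hHol.trans_eq ?_
    congr 1
    · congr 1
      refine lintegral_congr fun x => ?_
      rw [← ENNReal.rpow_mul, haqr, ENNReal.rpow_one]
    · congr 1
      refine lintegral_congr fun x => ?_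
      rw [← ENNReal.rpow_mul, hbqr, ENNReal.rpow_one]
  -- Tonelli identities
  have hgInt : ∫⁻ x, g x = ∫⁻ z, F z ^ (1 + 1/k₁) := by
    rw [Measure.volume_eq_prod]
    exact (lintegral_prod _ (hFm.pow_const _).aemeasurable).symm
  have hhInt : ∫⁻ x, h x = ∫⁻ z, (‖z.2‖₊ : ℝ≥0∞) ^ (2:ℝ) * F z := by
    rw [Measure.volume_eq_prod]
    exact (lintegral_prod _ hinner.aemeasurable).symm
  have hρInt : ∫⁻ x, ρ' x = ∫⁻ z, F z := by
    rw [Measure.volume_eq_prod]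
    exact (lintegral_prod _ hFm.aemeasurable).symm
  -- value of ∫⁻ g
  set A : ℝ := (eLpNorm f (ENNReal.ofReal (1 + 1/k₁)) volume).toReal with hAdef
  have hpne : ENNReal.ofReal (1 + 1/k₁) ≠ 0 := by
    simp only [ne_eq, ENNReal.ofReal_eq_zero, not_le]; linarith
  have hgval : ∫⁻ z, F z ^ (1 + 1/k₁) = ENNReal.ofReal (A ^ (1 + 1/k₁)) := by
    have hAtop : eLpNorm f (ENNReal.ofReal (1 + 1/k₁)) volume ≠ ⊤ := hfLp.2.ne
    have heq := eLpNorm_eq_lintegral_rpow_enorm_toReal (μ := volume) (f := f)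
      hpne ENNReal.ofReal_ne_top
    rw [ENNReal.toReal_ofReal hp0.le] at heq
    have hnn : ∀ z : E3 × E3, ‖f z‖ₑ = F z := fun z =>
      Real.enorm_eq_ofReal (hfnn z)
    simp only [hnn] at heq
    have hpow : eLpNorm f (ENNReal.ofReal (1 + 1/k₁)) volume ^ (1 + 1/k₁)
        = ∫⁻ z, F z ^ (1 + 1/k₁) := by
      have hmul : (1/(1 + 1/k₁)) * (1 + 1/k₁) = 1 := by field_simp
      rw [heq, ← ENNReal.rpow_mul, hmul, ENNReal.rpow_one]
    rw [← hpow, hAdef, ← ENNReal.ofReal_rpow_of_nonneg ENNReal.toReal_nonneg hp0.le,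
      ENNReal.ofReal_toReal hAtop]
  -- value of ∫⁻ h
  have hhval : ∫⁻ z, (‖z.2‖₊ : ℝ≥0∞) ^ (2:ℝ) * F z
      = ENNReal.ofReal (∫ z : E3 × E3, ‖z.2‖^2 * f z) := by
    rw [ofReal_integral_eq_lintegral_ofReal hfE
      (Filter.Eventually.of_forall fun z => mul_nonneg (by positivity) (hfnn z))]
    refine lintegral_congr fun z => ?_
    rw [ENNReal.ofReal_mul (by positivity), ENNReal.ofReal_pow (norm_nonneg _),
      ← coe_nnnorm, ENNReal.ofReal_coe_nnreal, ← ENNReal.rpow_natCast]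
    norm_num
    rfl
  -- assemble the bound
  set M : ℝ≥0∞ := K ^ q * (ENNReal.ofReal (A ^ (1 + 1/k₁))) ^ (1/r)
      * (ENNReal.ofReal (∫ z : E3 × E3, ‖z.2‖^2 * f z)) ^ (1/r') with hMdef
  have hMtop : M ≠ ⊤ := by
    rw [hMdef]
    refine ENNReal.mul_ne_top (ENNReal.mul_ne_top ?_ ?_) ?_
    · exact (ENNReal.rpow_lt_top_of_nonneg hq0.le hKtop).ne
    · exact (ENNReal.rpow_lt_top_of_nonneg (by positivity) ENNReal.ofReal_ne_top).ne
    · exact (ENNReal.rpow_lt_top_of_nonneg (by positivity) ENNReal.ofReal_ne_top).ne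
  have hall : ∫⁻ x, ρ' x ^ q ≤ M := by
    refine h2.trans ?_
    rw [hMdef, mul_assoc]
    refine mul_le_mul_right ?_ _
    refine h3.trans_eq ?_
    rw [hgInt, hgval, hhInt, hhval]
  -- identification of ρ
  have hρeq : ∀ x, (∫ v, f (x,v)) = (ρ' x).toReal := fun x => by
    rw [integral_eq_lintegral_of_nonneg_ae (Filter.Eventually.of_forall fun v => hfnn _)
      ((hfm.comp measurable_prodMk_left).aestronglyMeasurable)]
  have hρ'fin : ∀ᵐ x ∂(volume : Measure E3), ρ' x < ⊤ := by
    refine ae_lt_top hρ'm ?_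
    rw [hρInt]
    have : ∫⁻ z, F z = ∫⁻ z, (‖f z‖₊ : ℝ≥0∞) :=
      lintegral_congr fun z => (Real.enorm_eq_ofReal (hfnn z)).symm
    rw [this]
    exact hfint.2.ne
  have hρnn : ∀ x, 0 ≤ ∫ v, f (x,v) := fun x => integral_nonneg fun v => hfnn _
  have hae : (fun x => ENNReal.ofReal (∫ v, f (x,v))) =ᵐ[volume] ρ' := by
    filter_upwards [hρ'fin] with x hx
    rw [hρeq x, ENNReal.ofReal_toReal hx.ne]
  have hqne : ENNReal.ofReal q ≠ 0 := by
    simp only [ne_eq, ENNReal.ofReal_eq_zero, not_le]; linarith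
  have hρsm : StronglyMeasurable (fun x => ∫ v, f (x,v)) :=
    StronglyMeasurable.integral_prod_right (f := fun x v => f (x,v))
      hfm.stronglyMeasurable
  have hlq : ∫⁻ x, (ENNReal.ofReal (∫ v, f (x,v))) ^ q ≤ M := by
    refine le_trans (le_of_eq (lintegral_congr_ae ?_)) hall
    filter_upwards [hae] with x hx
    rw [hx]
  constructor
  · refine ⟨hρsm.aestronglyMeasurable, ?_⟩
    rw [eLpNorm_eq_lintegral_rpow_enorm_toReal hqne ENNReal.ofReal_ne_top,
      ENNReal.toReal_ofReal hq0.le]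
    refine ENNReal.rpow_lt_top_of_nonneg (by positivity) ?_
    have : ∫⁻ x, ‖∫ v, f (x,v)‖ₑ ^ q
        = ∫⁻ x, (ENNReal.ofReal (∫ v, f (x,v))) ^ q := by
      refine lintegral_congr fun x => ?_
      rw [Real.enorm_eq_ofReal (hρnn x)]
    rw [this]
    exact (hlq.trans_lt (lt_top_iff_ne_top.2 hMtop)).ne
  · have hint_eq : (∫ x : E3, (∫ v, f (x,v)) ^ q)
        = (∫⁻ x, (ENNReal.ofReal (∫ v, f (x,v))) ^ q).toReal := by
      rw [integral_eq_lintegral_of_nonneg_ae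
        (Filter.Eventually.of_forall fun x => Real.rpow_nonneg (hρnn x) q)
        (((Real.continuous_rpow_const hq0.le).measurable.comp hρsm.measurable).stronglyMeasurable.aestronglyMeasurable)]
      congr 1
      refine lintegral_congr fun x => ?_
      rw [ENNReal.ofReal_rpow_of_nonneg (hρnn x) hq0.le]
    rw [hint_eq]
    refine le_trans (ENNReal.toReal_mono hMtop hlq) ?_
    rw [hMdef]
    rw [ENNReal.toReal_mul, ENNReal.toReal_mul, ← ENNReal.toReal_rpow,
      ← ENNReal.toReal_rpow, ← ENNReal.toReal_rpow,
      ENNReal.toReal_ofReal (Real.rpow_nonneg ENNReal.toReal_nonneg _),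
      ENNReal.toReal_ofReal (integral_nonneg fun z => mul_nonneg (by positivity) (hfnn z))]
    beta_reduce
    have h2B : 2 * ((1/2) * ∫ z : E3 × E3, ‖z.2‖^2 * f z)
        = ∫ z : E3 × E3, ‖z.2‖^2 * f z := by ring
    rw [h2B]
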